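/- arXiv:2409.09442 — 6 statements merged into one kernel-verified Lean document; each statement's English description precedes it below -/
import Mathlib

section
/- Let A be a nonzero n×n real symmetric positive semidefinite matrix and let X be an n×n real matrix such that A^{1/2} X = Y A^{1/2} for some n×n real matrix Y. Then (i) ‖Xv‖_A ≤ ‖X‖_A ‖v‖_A for every v ∈ ℝⁿ, and (ii) ‖X‖_A = max over v ∈ R(A)\{0} of ‖Yv‖₂/‖v‖₂, where R(A) denotes the range (column space) of A. -/
open Matrix

/-- Euclidean norm of a vector in `ℝⁿ`. -/
noncomputable def enorm' {n : ℕ} (v : Fin n → ℝ) : ℝ := Real.sqrt (v ⬝ᵥ v)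

/-- The `A`-seminorm `‖v‖_A = sqrt (vᵀ A v)` of a vector. -/
noncomputable def vnorm {n : ℕ} (A : Matrix (Fin n) (Fin n) ℝ) (v : Fin n → ℝ) : ℝ :=
  Real.sqrt (v ⬝ᵥ A.mulVec v)

/-- The `A`-seminorm of a matrix: sup over `v ∉ N(A)` of `‖Xv‖_A / ‖v‖_A`. -/
noncomputable def matNorm {n : ℕ} (A X : Matrix (Fin n) (Fin n) ℝ) : ℝ :=
  sSup ((fun v => vnorm A (X.mulVec v) / vnorm A v) '' {v | A.mulVec v ≠ 0})

/-- Penrose conditions: `X` is the Moore–Penrose inverse of `S`. -/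
def IsMP {m : ℕ} (S X : Matrix (Fin m) (Fin m) ℝ) : Prop :=
  S * X * S = S ∧ X * S * X = X ∧ (S * X)ᵀ = S * X ∧ (X * S)ᵀ = X * S

/-- `eigk S k` is the `k`-th smallest eigenvalue (1-indexed, counted with
multiplicity) of a symmetric matrix `S` (junk value otherwise). -/
noncomputable def eigk {m : ℕ} (S : Matrix (Fin m) (Fin m) ℝ) (k : ℕ) : ℝ :=
  if hS : S.IsHermitian then
    if h : k - 1 < m then hS.eigenvalues (Tuple.sort hS.eigenvalues ⟨k - 1, h⟩) else 0
  else 0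

/-- The square root of a positive semidefinite matrix, as `Matrix.PosSemidef.sqrt` was defined
in Mathlib (Dec 2024); it has since been removed from Mathlib. -/
noncomputable def Matrix.PosSemidef.sqrt {n : ℕ} {A : Matrix (Fin n) (Fin n) ℝ}
    (hA : A.PosSemidef) : Matrix (Fin n) (Fin n) ℝ :=
  (hA.1.eigenvectorUnitary : Matrix (Fin n) (Fin n) ℝ) *
    diagonal ((↑) ∘ Real.sqrt ∘ hA.1.eigenvalues) *
    (star (hA.1.eigenvectorUnitary : Matrix (Fin n) (Fin n) ℝ))

/-!
Write `S = A^{1/2}`. Then `‖v‖_A = ‖S v‖₂`, and `S X = Y S` turns the ratio `‖Xv‖_A / ‖v‖_A`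
into `‖Y (S v)‖₂ / ‖S v‖₂`. Since `N(S) = N(A)` and `R(S) = R(A)`, the set of ratios defining
`‖X‖_A` is exactly the set of values `‖Yw‖₂ / ‖w‖₂` for `w ∈ R(A) \ {0}`. By homogeneity these
are the values of `w ↦ ‖Yw‖₂` on the unit sphere of `R(A)`, a nonempty compact set, so the
supremum is attained; in particular it is finite, which gives (i).
-/

open Metric

section NormRatio

variable {E F : Type*} [NormedAddCommGroup E] [NormedSpace ℝ E]
  [SeminormedAddCommGroup F] [NormedSpace ℝ F]

theorem image_norm_div_norm_eq_image_sphere (V : Submodule ℝ E) (T : E →ₗ[ℝ] F) :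
    (fun v => ‖T v‖ / ‖v‖) '' ((V : Set E) \ {0}) = (fun v => ‖T v‖) '' (V ∩ sphere 0 1) := by
  apply Set.Subset.antisymm
  · rintro r ⟨v, ⟨hvV, hv0⟩, rfl⟩
    have hv : ‖v‖ ≠ 0 := norm_ne_zero_iff.mpr hv0
    refine ⟨‖v‖⁻¹ • v, ⟨V.smul_mem _ hvV, ?_⟩, ?_⟩
    · simp [norm_smul, hv]
    · simp only [map_smul, norm_smul, norm_inv, norm_norm]
      rw [inv_mul_eq_div]
  · rintro r ⟨v, ⟨hvV, hv1⟩, rfl⟩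
    refine ⟨v, ⟨hvV, ne_zero_of_mem_unit_sphere ⟨v, hv1⟩⟩, ?_⟩
    simp [mem_sphere_zero_iff_norm.mp hv1]

theorem exists_isGreatest_norm_div_norm [FiniteDimensional ℝ E] {V : Submodule ℝ E}
    (hV : V ≠ ⊥) (T : E →ₗ[ℝ] F) :
    ∃ m, IsGreatest ((fun v => ‖T v‖ / ‖v‖) '' ((V : Set E) \ {0})) m := by
  rw [image_norm_div_norm_eq_image_sphere]
  have hK : IsCompact ((V : Set E) ∩ sphere 0 1) :=
    (isCompact_sphere 0 1).inter_left V.closed_of_finiteDimensional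
  obtain ⟨v, hvV, hv0⟩ := Submodule.exists_mem_ne_zero_of_ne_bot hV
  have hne : ((V : Set E) ∩ sphere 0 1).Nonempty :=
    ⟨‖v‖⁻¹ • v, V.smul_mem _ hvV, by simp [norm_smul, norm_ne_zero_iff.mpr hv0]⟩
  exact (hK.image (continuous_norm.comp T.continuous_of_finiteDimensional)).exists_isGreatest
    (hne.image _)

end NormRatio

theorem enorm'_eq_norm_toLp {n : ℕ} (v : Fin n → ℝ) :
    enorm' v = ‖(WithLp.toLp 2 v : EuclideanSpace ℝ (Fin n))‖ := by
  simp [enorm', EuclideanSpace.norm_eq, dotProduct, sq]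

theorem enorm'_eq_zero_iff {n : ℕ} {v : Fin n → ℝ} : enorm' v = 0 ↔ v = 0 := by
  simp [enorm'_eq_norm_toLp]

theorem exists_isGreatest_enorm'_div {n : ℕ} {M : Matrix (Fin n) (Fin n) ℝ} (hM : M ≠ 0)
    (Y : Matrix (Fin n) (Fin n) ℝ) :
    ∃ m, IsGreatest ((fun v => enorm' (Y *ᵥ v) / enorm' v) ''
      {v : Fin n → ℝ | (∃ w, v = M *ᵥ w) ∧ v ≠ 0}) m := by
  have hV : LinearMap.range (toLpLin 2 2 M) ≠ ⊥ := by
    rwa [Ne, LinearMap.range_eq_bot, LinearEquiv.map_eq_zero_iff]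
  obtain ⟨m, hm⟩ := exists_isGreatest_norm_div_norm hV (toLpLin 2 2 Y)
  refine ⟨m, ?_⟩
  convert hm using 1
  ext r
  constructor
  · rintro ⟨v, ⟨⟨w, rfl⟩, hv⟩, rfl⟩
    refine ⟨WithLp.toLp 2 (M *ᵥ w), ⟨⟨WithLp.toLp 2 w, rfl⟩, by simpa using hv⟩, ?_⟩
    simp [enorm'_eq_norm_toLp, toLpLin_apply]
  · rintro ⟨v, ⟨⟨w, rfl⟩, hv⟩, rfl⟩
    refine ⟨M *ᵥ WithLp.ofLp w, ⟨⟨_, rfl⟩, fun h => hv ?_⟩, ?_⟩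
    · simp [toLpLin_apply, h]
    · simp [enorm'_eq_norm_toLp, toLpLin_apply]

namespace Matrix.PosSemidef

variable {n : ℕ} {A : Matrix (Fin n) (Fin n) ℝ} (hA : A.PosSemidef)

theorem posSemidef_sqrt : hA.sqrt.PosSemidef := by
  unfold Matrix.PosSemidef.sqrt
  rw [star_eq_conjTranspose]
  apply PosSemidef.mul_mul_conjTranspose_same
  rw [posSemidef_diagonal_iff]
  exact fun i => Real.sqrt_nonneg _

theorem sqrt_mul_self : hA.sqrt * hA.sqrt = A := by
  unfold Matrix.PosSemidef.sqrt
  set U := (hA.1.eigenvectorUnitary : Matrix (Fin n) (Fin n) ℝ)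
  set D := diagonal ((↑) ∘ Real.sqrt ∘ hA.1.eigenvalues : Fin n → ℝ)
  have hU : star U * U = 1 := Unitary.coe_star_mul_self _
  calc U * D * star U * (U * D * star U) = U * (D * (star U * U) * D) * star U := by
        simp only [Matrix.mul_assoc]
    _ = A := by
        rw [hU, Matrix.mul_one, diagonal_mul_diagonal]
        conv_rhs => rw [hA.1.spectral_theorem, Unitary.conjStarAlgAut_apply]
        congr 3
        funext i
        simp [Real.mul_self_sqrt (hA.eigenvalues_nonneg i)]

theorem sqrt_mulVec_sqrt_mulVec (v : Fin n → ℝ) : hA.sqrt *ᵥ (hA.sqrt *ᵥ v) = A *ᵥ v := by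
  rw [mulVec_mulVec, hA.sqrt_mul_self]

theorem transpose_sqrt : hA.sqrtᵀ = hA.sqrt := by
  rw [← conjTranspose_eq_transpose_of_trivial]
  exact hA.posSemidef_sqrt.1.eq

theorem vnorm_eq_enorm'_sqrt_mulVec (v : Fin n → ℝ) : vnorm A v = enorm' (hA.sqrt *ᵥ v) := by
  rw [vnorm, enorm', ← hA.sqrt_mulVec_sqrt_mulVec, dotProduct_mulVec, ← vecMul_transpose,
    hA.transpose_sqrt]

theorem mulVec_eq_zero_iff {v : Fin n → ℝ} : A *ᵥ v = 0 ↔ hA.sqrt *ᵥ v = 0 := by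
  refine ⟨fun h => ?_, fun h => by rw [← hA.sqrt_mulVec_sqrt_mulVec, h, mulVec_zero]⟩
  rw [← enorm'_eq_zero_iff, ← hA.vnorm_eq_enorm'_sqrt_mulVec, vnorm, h, dotProduct_zero,
    Real.sqrt_zero]

theorem range_sqrt_mulVecLin : LinearMap.range hA.sqrt.mulVecLin = LinearMap.range A.mulVecLin := by
  have hcomp : A.mulVecLin = hA.sqrt.mulVecLin ∘ₗ hA.sqrt.mulVecLin := by
    rw [← mulVecLin_mul, hA.sqrt_mul_self]
  have hle : LinearMap.range A.mulVecLin ≤ LinearMap.range hA.sqrt.mulVecLin :=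
    hcomp ▸ LinearMap.range_comp_le_range _ _
  have hrank : A.rank = hA.sqrt.rank := by
    have hAeq : A = hA.sqrtᵀ * hA.sqrt := by rw [hA.transpose_sqrt, hA.sqrt_mul_self]
    exact (congrArg rank hAeq).trans (rank_transpose_mul_self _)
  exact (Submodule.eq_of_le_of_finrank_le hle hrank.ge).symm

theorem image_sqrt_mulVec :
    (hA.sqrt *ᵥ ·) '' {v | A *ᵥ v ≠ 0} = {v | (∃ w, v = A *ᵥ w) ∧ v ≠ 0} := by
  have hrange := SetLike.ext_iff.mp hA.range_sqrt_mulVecLin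
  simp only [LinearMap.mem_range, mulVecLin_apply] at hrange
  ext v
  constructor
  · rintro ⟨u, hu, rfl⟩
    obtain ⟨w, hw⟩ := (hrange _).mp ⟨u, rfl⟩
    exact ⟨⟨w, hw.symm⟩, hA.mulVec_eq_zero_iff.not.mp hu⟩
  · rintro ⟨⟨w, rfl⟩, hv⟩
    obtain ⟨u, hu⟩ := (hrange _).mpr ⟨w, rfl⟩
    exact ⟨u, hA.mulVec_eq_zero_iff.not.mpr (hu ▸ hv), hu⟩

variable {X Y : Matrix (Fin n) (Fin n) ℝ}

theorem vnorm_mulVec_eq (hXY : hA.sqrt * X = Y * hA.sqrt) (v : Fin n → ℝ) :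
    vnorm A (X *ᵥ v) = enorm' (Y *ᵥ (hA.sqrt *ᵥ v)) := by
  rw [hA.vnorm_eq_enorm'_sqrt_mulVec, mulVec_mulVec, hXY, ← mulVec_mulVec]

theorem image_vnorm_div_eq (hXY : hA.sqrt * X = Y * hA.sqrt) :
    (fun v => vnorm A (X *ᵥ v) / vnorm A v) '' {v | A *ᵥ v ≠ 0} =
      (fun v => enorm' (Y *ᵥ v) / enorm' v) '' {v | (∃ w, v = A *ᵥ w) ∧ v ≠ 0} := by
  rw [← hA.image_sqrt_mulVec, Set.image_image]
  simp only [hA.vnorm_mulVec_eq hXY, hA.vnorm_eq_enorm'_sqrt_mulVec]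

theorem vnorm_mulVec_le_matNorm_mul (hXY : hA.sqrt * X = Y * hA.sqrt)
    (hbdd : BddAbove ((fun v => vnorm A (X *ᵥ v) / vnorm A v) '' {v | A *ᵥ v ≠ 0}))
    (v : Fin n → ℝ) : vnorm A (X *ᵥ v) ≤ matNorm A X * vnorm A v := by
  by_cases hv : hA.sqrt *ᵥ v = 0
  · rw [hA.vnorm_mulVec_eq hXY, hA.vnorm_eq_enorm'_sqrt_mulVec, hv, mulVec_zero,
      enorm'_eq_zero_iff.mpr rfl, mul_zero]
  · have hpos : 0 < vnorm A v := by
      rw [hA.vnorm_eq_enorm'_sqrt_mulVec]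
      exact (Real.sqrt_nonneg _).lt_of_ne' (enorm'_eq_zero_iff.not.mpr hv)
    exact (div_le_iff₀ hpos).mp (le_csSup hbdd ⟨v, hA.mulVec_eq_zero_iff.not.mpr hv, rfl⟩)

end Matrix.PosSemidef

theorem stmt0 {n : ℕ} (A X Y : Matrix (Fin n) (Fin n) ℝ)
    (hA : A.PosSemidef) (hA0 : A ≠ 0)
    (hXY : hA.sqrt * X = Y * hA.sqrt) :
    (∀ v : Fin n → ℝ, vnorm A (X.mulVec v) ≤ matNorm A X * vnorm A v) ∧
    IsGreatest ((fun v => enorm' (Y.mulVec v) / enorm' v) ''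
      {v : Fin n → ℝ | (∃ w, v = A.mulVec w) ∧ v ≠ 0}) (matNorm A X) := by
  obtain ⟨m, hm⟩ := exists_isGreatest_enorm'_div hA0 Y
  rw [← hA.image_vnorm_div_eq hXY] at hm
  have hmatNorm : matNorm A X = m := hm.csSup_eq
  refine ⟨hA.vnorm_mulVec_le_matNorm_mul hXY hm.bddAbove, ?_⟩
  rw [hmatNorm, ← hA.image_vnorm_div_eq hXY]
  exact hm
end

section
/- Under the two-grid assumptions, if M̄ = M + Mᵀ − MᵀAM is positive semidefinite and N(M̄) ∩ R(A) = {0}, then ‖E_TG‖_A < 1. -/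
open Matrix

/-- Euclidean norm of a vector in `ℝⁿ`. -/
noncomputable def enorm {n : ℕ} (v : Fin n → ℝ) : ℝ := Real.sqrt (v ⬝ᵥ v)

/-!
With `Q = P A_c† Pᵀ` the Penrose equations give `QAQ = Q` and `Q ⪰ 0`, and expanding yields
`E_TGᵀ A E_TG = A - A B A` with `B = M̄ + (I - AM)ᵀ Q (I - AM) ⪰ M̄`. The form of `M̄` is positive
on `R(A) \ {0}`, and compactness of the unit sphere of a subspace makes this uniform:
`(Av)ᵀ B (Av) ≥ μ vᵀAv` for some `μ > 0`, so `‖E_TG v‖_A² ≤ (1 - μ) ‖v‖_A²`.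
-/

open scoped MatrixOrder

namespace Matrix

section QuadraticForms

lemma transpose_eq_self_of_posSemidef {ι : Type*} {S : Matrix ι ι ℝ} (hS : S.PosSemidef) :
    Sᵀ = S :=
  (isHermitian_iff_isSymm.mp hS.isHermitian).eq

variable {ι κ : Type*} [Fintype ι] [Fintype κ]

lemma dotProduct_mulVec_transpose_mul_mul {R : Type*} [CommRing R] (B : Matrix κ ι R)
    (C : Matrix κ κ R) (u : ι → R) :
    u ⬝ᵥ (Bᵀ * C * B) *ᵥ u = (B *ᵥ u) ⬝ᵥ C *ᵥ (B *ᵥ u) := by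
  rw [← mulVec_mulVec, ← mulVec_mulVec, dotProduct_mulVec, vecMul_transpose,
    dotProduct_mulVec, dotProduct_mulVec]

lemma dotProduct_smul_mulVec_smul {R : Type*} [CommRing R] (C : Matrix ι ι R) (c : R)
    (v : ι → R) : (c • v) ⬝ᵥ C *ᵥ (c • v) = c ^ 2 * (v ⬝ᵥ C *ᵥ v) := by
  rw [mulVec_smul, smul_dotProduct, dotProduct_smul, smul_eq_mul, smul_eq_mul]
  ring

-- The bound is the minimum of the Rayleigh quotient over the (compact) unit sphere of `W`.
lemma exists_pos_mul_dotProduct_self_le (W : Submodule ℝ (ι → ℝ)) (C : Matrix ι ι ℝ)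
    (hC : ∀ w ∈ W, w ≠ 0 → 0 < w ⬝ᵥ C *ᵥ w) :
    ∃ μ > 0, ∀ w ∈ W, μ * (w ⬝ᵥ w) ≤ w ⬝ᵥ C *ᵥ w := by
  by_cases hW : ∃ w ∈ W, w ≠ 0
  swap
  · push Not at hW
    exact ⟨1, one_pos, fun w hw => by simp [hW w hw]⟩
  obtain ⟨w₀, hw₀, hw₀0⟩ := hW
  set S := (W : Set (ι → ℝ)) ∩ Metric.sphere 0 1
  let ratio : (ι → ℝ) → ℝ := fun w => (w ⬝ᵥ C *ᵥ w) / (w ⬝ᵥ w)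
  have hself_pos : ∀ w : ι → ℝ, w ≠ 0 → 0 < w ⬝ᵥ w := fun w hw =>
    (Fintype.sum_nonneg fun i => mul_self_nonneg (w i)).lt_of_ne'
      (mt dotProduct_self_eq_zero.mp hw)
  have hnormalize : ∀ w ∈ W, w ≠ 0 → ‖w‖⁻¹ • w ∈ S := fun w hw hw0 =>
    ⟨W.smul_mem _ hw, by simp [norm_smul, norm_ne_zero_iff.mpr hw0]⟩
  have hratio_smul : ∀ w : ι → ℝ, w ≠ 0 → ratio (‖w‖⁻¹ • w) = ratio w := fun w hw0 => by
    have : ‖w‖⁻¹ ^ 2 ≠ 0 := by positivity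
    simp only [ratio]
    rw [dotProduct_smul_mulVec_smul, smul_dotProduct, dotProduct_smul, smul_eq_mul, smul_eq_mul,
      ← mul_assoc, ← sq, mul_div_mul_left _ _ this]
  have hcont : ContinuousOn ratio S := by
    refine ContinuousOn.div (by fun_prop) (by fun_prop) fun w hw => (hself_pos w ?_).ne'
    exact ne_zero_of_mem_unit_sphere ⟨w, hw.2⟩
  obtain ⟨u, huS, hmin⟩ := ((isCompact_sphere 0 1).inter_left W.closed_of_finiteDimensional
    ).exists_isMinOn ⟨_, hnormalize w₀ hw₀ hw₀0⟩ hcont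
  have hu0 : u ≠ 0 := ne_zero_of_mem_unit_sphere ⟨u, huS.2⟩
  refine ⟨ratio u, div_pos (hC u huS.1 hu0) (hself_pos u hu0), fun w hw => ?_⟩
  rcases eq_or_ne w 0 with rfl | hw0
  · simp
  have := isMinOn_iff.mp hmin _ (hnormalize w hw hw0)
  rwa [hratio_smul w hw0, le_div_iff₀ (hself_pos w hw0)] at this

-- Writing `A = RᵀR`, both sides are quadratic forms in `Rv`, which ranges over `R(R)`.
lemma exists_pos_mul_le_dotProduct_mulVec_mulVec {A C : Matrix ι ι ℝ} (hA : A.PosSemidef)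
    (hC : ∀ v, A *ᵥ v ≠ 0 → 0 < (A *ᵥ v) ⬝ᵥ C *ᵥ (A *ᵥ v)) :
    ∃ μ > 0, ∀ v, μ * (v ⬝ᵥ A *ᵥ v) ≤ (A *ᵥ v) ⬝ᵥ C *ᵥ (A *ᵥ v) := by
  classical
  obtain ⟨R, rfl⟩ := CStarAlgebra.nonneg_iff_eq_star_mul_self.mp hA.nonneg
  have hRt : star R = Rᵀ := conjTranspose_eq_transpose_of_trivial R
  have hquad : ∀ v, v ⬝ᵥ (star R * R) *ᵥ v = (R *ᵥ v) ⬝ᵥ (R *ᵥ v) := fun v => by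
    rw [hRt, ← mulVec_mulVec, dotProduct_mulVec, vecMul_transpose]
  have hform : ∀ v, ((star R * R) *ᵥ v) ⬝ᵥ C *ᵥ ((star R * R) *ᵥ v)
      = (R *ᵥ v) ⬝ᵥ (R * C * Rᵀ) *ᵥ (R *ᵥ v) := fun v => by
    rw [hRt, ← mulVec_mulVec, ← dotProduct_mulVec_transpose_mul_mul, transpose_transpose]
  have hpos : ∀ w ∈ LinearMap.range R.mulVecLin, w ≠ 0 → 0 < w ⬝ᵥ (R * C * Rᵀ) *ᵥ w := by
    rintro _ ⟨v, rfl⟩ hv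
    rw [mulVecLin_apply] at hv ⊢
    rw [← hform]
    refine hC v fun hAv => hv ?_
    rw [← dotProduct_self_eq_zero, ← hquad, hAv, dotProduct_zero]
  obtain ⟨μ, hμ, hbound⟩ := exists_pos_mul_dotProduct_self_le _ _ hpos
  exact ⟨μ, hμ, fun v => by simpa only [hquad, hform, mulVecLin_apply] using hbound _ ⟨v, rfl⟩⟩

lemma PosSemidef.dotProduct_mulVec_pos_of_ker_inter_range {A B : Matrix ι ι ℝ}
    (hB : B.PosSemidef) (hBA : {v | B *ᵥ v = 0} ∩ {v | ∃ w, v = A *ᵥ w} = {0}) {v : ι → ℝ}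
    (hv : A *ᵥ v ≠ 0) : 0 < (A *ᵥ v) ⬝ᵥ B *ᵥ (A *ᵥ v) := by
  have hnonneg : 0 ≤ (A *ᵥ v) ⬝ᵥ B *ᵥ (A *ᵥ v) := by
    simpa using hB.dotProduct_mulVec_nonneg (A *ᵥ v)
  refine hnonneg.lt_of_ne' fun h0 => hv ?_
  have hker : B *ᵥ (A *ᵥ v) = 0 := (hB.dotProduct_mulVec_zero_iff _).mp (by simpa using h0)
  have hmem : A *ᵥ v ∈ {v | B *ᵥ v = 0} ∩ {v | ∃ w, v = A *ᵥ w} := ⟨hker, v, rfl⟩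
  rwa [hBA] at hmem

end QuadraticForms

end Matrix

section MoorePenrose

variable {m : ℕ} {S X Y : Matrix (Fin m) (Fin m) ℝ}

lemma IsMP.transpose (h : IsMP S X) : IsMP Sᵀ Xᵀ := by
  obtain ⟨h1, h2, h3, h4⟩ := h
  refine ⟨?_, ?_, ?_, ?_⟩
  · rw [← transpose_mul, ← transpose_mul, ← Matrix.mul_assoc, h1]
  · rw [← transpose_mul, ← transpose_mul, ← Matrix.mul_assoc, h2]
  · rw [← transpose_mul, transpose_transpose, h4]
  · rw [← transpose_mul, transpose_transpose, h3]

lemma IsMP.unique (hX : IsMP S X) (hY : IsMP S Y) : X = Y := by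
  obtain ⟨hX1, hX2, hX3, hX4⟩ := hX
  obtain ⟨hY1, hY2, hY3, hY4⟩ := hY
  have hSX : S * X = S * Y :=
    calc S * X = S * Y * S * X := by rw [hY1]
      _ = (S * Y)ᵀ * (S * X)ᵀ := by rw [hY3, hX3, Matrix.mul_assoc]
      _ = (S * X * S * Y)ᵀ := by rw [← transpose_mul, ← Matrix.mul_assoc]
      _ = S * Y := by rw [hX1, hY3]
  have hXS : X * S = Y * S :=
    calc X * S = X * (S * Y * S) := by rw [hY1]
      _ = (X * S)ᵀ * (Y * S)ᵀ := by rw [hX4, hY4]; simp only [Matrix.mul_assoc]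
      _ = (Y * (S * X * S))ᵀ := by rw [← transpose_mul]; simp only [Matrix.mul_assoc]
      _ = Y * S := by rw [hX1, hY4]
  calc X = X * S * Y := by rw [Matrix.mul_assoc, ← hSX, ← Matrix.mul_assoc, hX2]
    _ = Y := by rw [hXS, hY2]

lemma IsMP.transpose_eq_self (hS : Sᵀ = S) (h : IsMP S X) : Xᵀ = X :=
  (hS ▸ h.transpose).unique h

lemma IsMP.posSemidef (hS : S.PosSemidef) (h : IsMP S X) : X.PosSemidef := by
  have hXt : Xᵀ = X := h.transpose_eq_self (Matrix.transpose_eq_self_of_posSemidef hS)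
  have := hS.conjTranspose_mul_mul_same X
  rwa [conjTranspose_eq_transpose_of_trivial, hXt, h.2.1] at this

end MoorePenrose

section TwoGrid

theorem twoGrid_energy_identity {ι R : Type*} [Fintype ι] [DecidableEq ι] [CommRing R]
    {A Q : Matrix ι ι R} (hA : Aᵀ = A) (hQ : Qᵀ = Q) (hQAQ : Q * A * Q = Q)
    (M : Matrix ι ι R) :
    ((1 - Q * A) * (1 - M * A))ᵀ * A * ((1 - Q * A) * (1 - M * A)) =
      A - A * (M + Mᵀ - Mᵀ * A * M + (1 - A * M)ᵀ * Q * (1 - A * M)) * A := by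
  have hcorrection : (1 - Q * A)ᵀ * A * (1 - Q * A) = A - A * Q * A := by
    rw [transpose_sub, transpose_one, transpose_mul, hA, hQ]
    calc (1 - A * Q) * A * (1 - Q * A) = A - A * Q * A - A * Q * A + A * (Q * A * Q) * A := by
          noncomm_ring
      _ = A - A * Q * A := by rw [hQAQ]; noncomm_ring
  calc ((1 - Q * A) * (1 - M * A))ᵀ * A * ((1 - Q * A) * (1 - M * A))
      = (1 - M * A)ᵀ * ((1 - Q * A)ᵀ * A * (1 - Q * A)) * (1 - M * A) := by
        rw [transpose_mul]; noncomm_ring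
    _ = _ := by
        rw [hcorrection]
        simp only [transpose_sub, transpose_one, transpose_mul, hA]
        noncomm_ring

variable {n nc : ℕ} {A : Matrix (Fin n) (Fin n) ℝ} {P : Matrix (Fin n) (Fin nc) ℝ}
  {X : Matrix (Fin nc) (Fin nc) ℝ}

lemma IsMP.posSemidef_coarseCorrection (hA : A.PosSemidef) (h : IsMP (Pᵀ * A * P) X) :
    (P * X * Pᵀ).PosSemidef := by
  have hAc : (Pᵀ * A * P).PosSemidef := by
    simpa only [conjTranspose_eq_transpose_of_trivial] using hA.conjTranspose_mul_mul_same P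
  simpa only [conjTranspose_eq_transpose_of_trivial, transpose_transpose] using
    (h.posSemidef hAc).conjTranspose_mul_mul_same Pᵀ

lemma IsMP.coarseCorrection_mul_mul_self (h : IsMP (Pᵀ * A * P) X) :
    P * X * Pᵀ * A * (P * X * Pᵀ) = P * X * Pᵀ :=
  calc P * X * Pᵀ * A * (P * X * Pᵀ) = P * (X * (Pᵀ * A * P) * X) * Pᵀ := by
        simp only [Matrix.mul_assoc]
    _ = P * X * Pᵀ := by rw [h.2.1]

lemma matNorm_le_sqrt {X : Matrix (Fin n) (Fin n) ℝ} {k : ℝ} (hk : 0 ≤ k)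
    (h : ∀ v, (X *ᵥ v) ⬝ᵥ A *ᵥ (X *ᵥ v) ≤ k * (v ⬝ᵥ A *ᵥ v)) : matNorm A X ≤ √k := by
  refine Real.sSup_le ?_ (Real.sqrt_nonneg k)
  rintro _ ⟨v, -, rfl⟩
  refine div_le_of_le_mul₀ (Real.sqrt_nonneg _) (Real.sqrt_nonneg k) ?_
  rw [vnorm, vnorm, ← Real.sqrt_mul hk]
  exact Real.sqrt_le_sqrt (h v)

end TwoGrid

theorem stmt3_general {n nc : ℕ}
    (A M : Matrix (Fin n) (Fin n) ℝ) (P : Matrix (Fin n) (Fin nc) ℝ)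
    (hA : A.PosSemidef)
    (Acd : Matrix (Fin nc) (Fin nc) ℝ) (hAcd : IsMP (Pᵀ * A * P) Acd)
    (hMbar : (M + Mᵀ - Mᵀ * A * M).PosSemidef)
    (hNR : {v : Fin n → ℝ | (M + Mᵀ - Mᵀ * A * M).mulVec v = 0} ∩
        {v : Fin n → ℝ | ∃ w, v = A.mulVec w} = {0}) :
    matNorm A ((1 - P * Acd * Pᵀ * A) * (1 - M * A)) < 1 := by
  have hAt : Aᵀ = A := transpose_eq_self_of_posSemidef hA
  have hQ : (P * Acd * Pᵀ).PosSemidef := hAcd.posSemidef_coarseCorrection hA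
  set B := M + Mᵀ - Mᵀ * A * M + (1 - A * M)ᵀ * (P * Acd * Pᵀ) * (1 - A * M)
  have hB : ∀ v, A *ᵥ v ≠ 0 → 0 < (A *ᵥ v) ⬝ᵥ B *ᵥ (A *ᵥ v) := fun v hv =>
    calc 0 < (A *ᵥ v) ⬝ᵥ (M + Mᵀ - Mᵀ * A * M) *ᵥ (A *ᵥ v) :=
          hMbar.dotProduct_mulVec_pos_of_ker_inter_range hNR hv
      _ ≤ (A *ᵥ v) ⬝ᵥ B *ᵥ (A *ᵥ v) := by
          rw [add_mulVec, dotProduct_add, dotProduct_mulVec_transpose_mul_mul]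
          exact le_add_of_nonneg_right
            (by simpa only [star_trivial] using hQ.dotProduct_mulVec_nonneg _)
  obtain ⟨μ, hμ, hbound⟩ := exists_pos_mul_le_dotProduct_mulVec_mulVec hA hB
  have henergy : ∀ v, (((1 - P * Acd * Pᵀ * A) * (1 - M * A)) *ᵥ v) ⬝ᵥ
      A *ᵥ (((1 - P * Acd * Pᵀ * A) * (1 - M * A)) *ᵥ v) =
      v ⬝ᵥ A *ᵥ v - (A *ᵥ v) ⬝ᵥ B *ᵥ (A *ᵥ v) := fun v => by
    rw [← dotProduct_mulVec_transpose_mul_mul, twoGrid_energy_identity hAt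
      (transpose_eq_self_of_posSemidef hQ) hAcd.coarseCorrection_mul_mul_self, sub_mulVec,
      dotProduct_sub, ← dotProduct_mulVec_transpose_mul_mul, hAt]
  refine (matNorm_le_sqrt (le_max_left 0 (1 - μ)) fun v => ?_).trans_lt ?_
  · have hv : 0 ≤ v ⬝ᵥ A *ᵥ v := by simpa using hA.dotProduct_mulVec_nonneg v
    rw [henergy]
    nlinarith [hbound v, mul_le_mul_of_nonneg_right (le_max_right 0 (1 - μ)) hv]
  · rw [Real.sqrt_lt' one_pos, one_pow]
    exact max_lt one_pos (by linarith)

theorem stmt3 {n nc : ℕ} (hn : nc < n)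
    (A M : Matrix (Fin n) (Fin n) ℝ) (P : Matrix (Fin n) (Fin nc) ℝ)
    (hA : A.PosSemidef) (hA0 : A ≠ 0)
    (hM : matNorm A (1 - M * A) ≤ 1)
    (hAc0 : Pᵀ * A * P ≠ 0)
    (Acd : Matrix (Fin nc) (Fin nc) ℝ) (hAcd : IsMP (Pᵀ * A * P) Acd)
    (hMbar : (M + Mᵀ - Mᵀ * A * M).PosSemidef)
    (hNR : {v : Fin n → ℝ | (M + Mᵀ - Mᵀ * A * M).mulVec v = 0} ∩
        {v : Fin n → ℝ | ∃ w, v = A.mulVec w} = {0}) :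
    matNorm A ((1 - P * Acd * Pᵀ * A) * (1 - M * A)) < 1 :=
  stmt3_general A M P hA Acd hAcd hMbar hNR
end

section
/- Let A be a nonzero n×n real symmetric positive semidefinite matrix whose diagonal part D is positive definite. If M = ωD⁻¹ with 0 < ω < 2/λ_max(D^{-1/2}AD^{-1/2}), then M̄ = M + Mᵀ − MᵀAM = ω²D⁻¹(2ω⁻¹D − A)D⁻¹ is symmetric positive definite. -/
open Matrix

/-!
Write `E = D^{-1/2}` and `S = E A E`. Then `M̄ = ω² E ((2/ω) I - S) E`, the hypothesis on `ω` says
that every eigenvalue of `S` lies below `2/ω`, so the middle factor is positive definite, and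
congruence by the invertible diagonal matrix `E` preserves positive definiteness.
-/

namespace Matrix.IsHermitian

lemma eigenvalues_le_eigk_card {m : ℕ} {S : Matrix (Fin m) (Fin m) ℝ} (hS : S.IsHermitian)
    (i : Fin m) : hS.eigenvalues i ≤ eigk S m := by
  have hm : m - 1 < m := Nat.sub_one_lt_of_lt i.pos
  rw [eigk, dif_pos hS, dif_pos hm]
  have hi : (Tuple.sort hS.eigenvalues).symm i ≤ ⟨m - 1, hm⟩ :=
    Fin.le_iff_val_le_val.mpr (Nat.le_sub_one_of_lt (Fin.is_lt _))
  simpa using Tuple.monotone_sort hS.eigenvalues hi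

lemma posDef_smul_one_sub_of_eigenvalues_lt {ι : Type*} [Fintype ι] [DecidableEq ι]
    {S : Matrix ι ι ℝ} (hS : S.IsHermitian) {c : ℝ} (hc : ∀ i, hS.eigenvalues i < c) :
    (c • 1 - S).PosDef := by
  have hsub : c • 1 - S = Unitary.conjStarAlgAut ℝ _ hS.eigenvectorUnitary
      (diagonal fun i => c - hS.eigenvalues i) := by
    conv_lhs => rw [hS.spectral_theorem]
    have hdiag : (diagonal fun i => c - hS.eigenvalues i) =
        c • 1 - diagonal (RCLike.ofReal ∘ hS.eigenvalues) := by
      rw [smul_one_eq_diagonal, diagonal_sub]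
      rfl
    rw [hdiag, map_sub, map_smul, map_one]
  rw [hsub, Unitary.conjStarAlgAut_apply,
    Matrix.IsUnit.posDef_star_right_conjugate_iff Unitary.isUnit_coe, posDef_diagonal_iff]
  exact fun i => sub_pos.mpr (hc i)

end Matrix.IsHermitian

lemma Matrix.nonsing_inv_mul_mul_nonsing_inv {ι R : Type*} [Fintype ι] [DecidableEq ι]
    [CommRing R] (D : Matrix ι ι R) : D⁻¹ * D * D⁻¹ = D⁻¹ := by
  by_cases h : IsUnit D.det
  · rw [nonsing_inv_mul D h, one_mul]
  · rw [nonsing_inv_apply_not_isUnit D h, mul_zero]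

lemma diagonal_one_div_sqrt_mul_self {ι : Type*} [Fintype ι] [DecidableEq ι] {d : ι → ℝ}
    (hd : ∀ i, 0 < d i) :
    (diagonal fun i => 1 / √(d i)) * (diagonal fun i => 1 / √(d i)) = (diagonal d)⁻¹ := by
  refine (inv_eq_right_inv ?_).symm
  rw [diagonal_mul_diagonal, diagonal_mul_diagonal, ← diagonal_one]
  congr 1
  ext i
  rw [one_div_mul_one_div, Real.mul_self_sqrt (hd i).le, mul_one_div_cancel (hd i).ne']

lemma add_transpose_sub_transpose_mul_mul_of_eq_smul_inv {ι : Type*} [Fintype ι]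
    [DecidableEq ι] {A D M : Matrix ι ι ℝ} (hD : Dᵀ = D) {ω : ℝ} (hω : ω ≠ 0) (hM : M = ω • D⁻¹) :
    M + Mᵀ - Mᵀ * A * M = ω ^ 2 • (D⁻¹ * ((2 * ω⁻¹) • D - A) * D⁻¹) := by
  have hMT : Mᵀ = M := by rw [hM, transpose_smul, transpose_nonsing_inv, hD]
  rw [hMT, hM]
  simp only [mul_sub, sub_mul, Matrix.mul_smul, Matrix.smul_mul,
    D.nonsing_inv_mul_mul_nonsing_inv]
  match_scalars
  · field_simp
    ring
  · ring

lemma inv_mul_smul_sub_mul_inv {ι : Type*} [Fintype ι] [DecidableEq ι] {D E : Matrix ι ι ℝ}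
    (hE : E * E = D⁻¹) (c : ℝ) (X : Matrix ι ι ℝ) :
    D⁻¹ * (c • D - X) * D⁻¹ = E * (c • 1 - E * X * E) * E := by
  simp only [mul_sub, sub_mul, Matrix.mul_smul, Matrix.smul_mul, D.nonsing_inv_mul_mul_nonsing_inv,
    Matrix.mul_one]
  simp only [← hE, Matrix.mul_assoc]

theorem stmt4_general {n : ℕ} (A : Matrix (Fin n) (Fin n) ℝ)
    (hA : A.PosSemidef)
    (hD : (Matrix.diagonal fun i => A i i).PosDef)
    (ω : ℝ) (hω0 : 0 < ω)
    (hω2 : ω < 2 / eigk ((Matrix.diagonal fun i => 1 / Real.sqrt (A i i)) * A *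
        (Matrix.diagonal fun i => 1 / Real.sqrt (A i i))) n)
    (M : Matrix (Fin n) (Fin n) ℝ)
    (hM : M = ω • (Matrix.diagonal fun i => A i i)⁻¹) :
    M + Mᵀ - Mᵀ * A * M =
        (ω ^ 2) • ((Matrix.diagonal fun i => A i i)⁻¹ *
          ((2 * ω⁻¹) • (Matrix.diagonal fun i => A i i) - A) *
          (Matrix.diagonal fun i => A i i)⁻¹) ∧
      (M + Mᵀ - Mᵀ * A * M).PosDef := by
  set E : Matrix (Fin n) (Fin n) ℝ := diagonal fun i => 1 / √(A i i)
  have hEE := diagonal_one_div_sqrt_mul_self (posDef_diagonal_iff.mp hD)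
  have hEH : Eᴴ = E := by simp [E]
  have hE : Function.Injective E.mulVec := by
    refine mulVec_injective_iff_isUnit.mpr (isUnit_diagonal.mpr (Pi.isUnit_iff.mpr fun i => ?_))
    exact (one_div_pos.mpr (Real.sqrt_pos.mpr (posDef_diagonal_iff.mp hD i))).ne'.isUnit
  have hS : (E * A * E).IsHermitian := by
    simpa only [hEH] using isHermitian_conjTranspose_mul_mul E hA.1
  -- As `2 / 0 = 0`, the bound `0 < ω < 2 / λ_max` already forces `λ_max > 0`.
  have hμ : 0 < eigk (E * A * E) n := (div_pos_iff_of_pos_left two_pos).mp (hω0.trans hω2)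
  have hlt : ∀ i, hS.eigenvalues i < 2 * ω⁻¹ := fun i =>
    (hS.eigenvalues_le_eigk_card i).trans_lt <| by
      rw [← div_eq_mul_inv, lt_div_iff₀' hω0, ← lt_div_iff₀ hμ]
      exact hω2
  have heq := add_transpose_sub_transpose_mul_mul_of_eq_smul_inv (A := A)
    (diagonal_transpose _) hω0.ne' hM
  refine ⟨heq, ?_⟩
  rw [heq, inv_mul_smul_sub_mul_inv hEE]
  have hPD := (hS.posDef_smul_one_sub_of_eigenvalues_lt hlt).conjTranspose_mul_mul_same hE
  rw [hEH] at hPD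
  exact hPD.smul (pow_pos hω0 2)

theorem stmt4 {n : ℕ} (A : Matrix (Fin n) (Fin n) ℝ)
    (hA : A.PosSemidef) (hA0 : A ≠ 0)
    (hD : (Matrix.diagonal fun i => A i i).PosDef)
    (ω : ℝ) (hω0 : 0 < ω)
    (hω2 : ω < 2 / eigk ((Matrix.diagonal fun i => 1 / Real.sqrt (A i i)) * A *
        (Matrix.diagonal fun i => 1 / Real.sqrt (A i i))) n)
    (M : Matrix (Fin n) (Fin n) ℝ)
    (hM : M = ω • (Matrix.diagonal fun i => A i i)⁻¹) :
    M + Mᵀ - Mᵀ * A * M =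
        (ω ^ 2) • ((Matrix.diagonal fun i => A i i)⁻¹ *
          ((2 * ω⁻¹) • (Matrix.diagonal fun i => A i i) - A) *
          (Matrix.diagonal fun i => A i i)⁻¹) ∧
      (M + Mᵀ - Mᵀ * A * M).PosDef :=
  stmt4_general A hA hD ω hω0 hω2 M hM
end

section
/- Let A be a nonzero n×n real symmetric positive semidefinite matrix, written A = D + L + Lᵀ where D is the diagonal part of A (assumed positive definite) and L is the strictly lower triangular part of A. If M = (D+L)⁻¹, then M̄ = M + Mᵀ − MᵀAM = (D+L)⁻ᵀ D (D+L)⁻¹ is symmetric positive definite. -/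
open Matrix

/-! With `T = D + L` we have `A = T + Tᵀ - D`, and `T M = 1` collapses `Mᵀ T M` and `Mᵀ Tᵀ M`
to `Mᵀ` and `M`, leaving `M̄ = Mᵀ D M`. Since `T` is lower triangular with the positive diagonal
of `D`, it is invertible, so `M̄` is a congruence of the positive definite `D` by an invertible
matrix. -/

namespace Matrix

variable {m R : Type*} [DecidableEq m] [CommRing R]

theorem IsLowerTriangular.isUnit_det [Fintype m] [LinearOrder m] {T : Matrix m m R}
    (hT : T.IsLowerTriangular) (hdiag : ∀ i, IsUnit (T i i)) : IsUnit T.det := by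
  rw [det_of_isLowerTriangular T hT]
  exact IsUnit.prod_univ_iff.mpr hdiag

theorem isLowerTriangular_diagonal_add_strictLower [LinearOrder m] (d : m → R)
    (A : Matrix m m R) :
    (diagonal d + of fun i j => if j < i then A i j else 0).IsLowerTriangular := by
  intro i j hij
  have hij : i < j := hij
  simp [hij.ne, hij.not_gt]

theorem add_transpose_sub_transpose_mul_mul_of_mul_eq_one [Fintype m] {T M D : Matrix m m R}
    (h : T * M = 1) : M + Mᵀ - Mᵀ * (T + Tᵀ - D) * M = Mᵀ * D * M := by
  have h' : Mᵀ * Tᵀ = 1 := by rw [← transpose_mul, h, transpose_one]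
  calc M + Mᵀ - Mᵀ * (T + Tᵀ - D) * M
      = M + Mᵀ - (Mᵀ * (T * M) + Mᵀ * Tᵀ * M - Mᵀ * D * M) := by noncomm_ring
    _ = Mᵀ * D * M := by rw [h, h']; noncomm_ring

end Matrix

theorem stmt5_general {n : ℕ} (A : Matrix (Fin n) (Fin n) ℝ)
    (D L M : Matrix (Fin n) (Fin n) ℝ)
    (hDdef : D = Matrix.diagonal fun i => A i i)
    (hLdef : L = Matrix.of fun (i j : Fin n) => if (j : ℕ) < (i : ℕ) then A i j else 0)
    (hdec : A = D + L + Lᵀ)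
    (hD : D.PosDef)
    (hMdef : M = (D + L)⁻¹) :
    M + Mᵀ - Mᵀ * A * M = ((D + L)⁻¹)ᵀ * D * (D + L)⁻¹ ∧
      (M + Mᵀ - Mᵀ * A * M).PosDef := by
  have hlower : (D + L).IsLowerTriangular := by
    rw [hDdef, hLdef]; exact isLowerTriangular_diagonal_add_strictLower _ A
  have hdiag : ∀ i, (D + L) i i = D i i := fun i => by simp [hLdef]
  have hunit : IsUnit (D + L).det :=
    hlower.isUnit_det fun i => (hdiag i ▸ hD.diag_pos).ne'.isUnit
  have hDt : Dᵀ = D := by simpa using hD.isHermitian.eq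
  have hA : A = (D + L) + (D + L)ᵀ - D := by rw [hdec, transpose_add, hDt]; abel
  have hres : M + Mᵀ - Mᵀ * A * M = Mᵀ * D * M := by
    rw [hA]
    exact add_transpose_sub_transpose_mul_mul_of_mul_eq_one (hMdef ▸ mul_nonsing_inv _ hunit)
  have hMinj : Function.Injective M.mulVec := by
    rwa [mulVec_injective_iff_isUnit, hMdef, isUnit_nonsing_inv_iff, isUnit_iff_isUnit_det]
  refine ⟨hres.trans (by rw [hMdef]), hres ▸ ?_⟩
  simpa using hD.conjTranspose_mul_mul_same hMinj

theorem stmt5 {n : ℕ} (A : Matrix (Fin n) (Fin n) ℝ)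
    (hA : A.PosSemidef) (hA0 : A ≠ 0)
    (D L M : Matrix (Fin n) (Fin n) ℝ)
    (hDdef : D = Matrix.diagonal fun i => A i i)
    (hLdef : L = Matrix.of fun (i j : Fin n) => if (j : ℕ) < (i : ℕ) then A i j else 0)
    (hdec : A = D + L + Lᵀ)
    (hD : D.PosDef)
    (hMdef : M = (D + L)⁻¹) :
    M + Mᵀ - Mᵀ * A * M = ((D + L)⁻¹)ᵀ * D * (D + L)⁻¹ ∧
      (M + Mᵀ - Mᵀ * A * M).PosDef :=
  stmt5_general A D L M hDdef hLdef hdec hD hMdef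
end

section
/- Under the two-grid assumptions, if rank(A_c) = rank(A), then ‖E_TG‖_A = 0. -/
open Matrix

/-!
The rank chain `rank (Pᵀ A P) ≤ rank (A P) ≤ rank A` collapses, so `range (A P) = range A` and,
by rank–nullity, `ker (Pᵀ A P) = ker (A P)`. Writing `A v = A P w`, the identity
`A_c A_c† A_c = A_c` then yields `A P A_c† Pᵀ A = A`, i.e. `A (I - P A_c† Pᵀ A) = 0`: the coarse
correction maps everything into `N(A)`, so `‖E_TG v‖_A = 0` for every `v`.
-/

namespace Matrix

variable {K : Type*} [Field K] {l m n o : Type*}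

theorem range_mulVecLin_mul_eq_of_rank_eq [Fintype m] [Fintype n]
    {A : Matrix l m K} {B : Matrix m n K}
    (h : (A * B).rank = A.rank) :
    LinearMap.range (A * B).mulVecLin = LinearMap.range A.mulVecLin := by
  rw [rank, rank, mulVecLin_mul] at h
  rw [mulVecLin_mul]
  exact Submodule.eq_of_le_of_finrank_le (LinearMap.range_comp_le_range _ _) h.ge

theorem ker_mulVecLin_mul_eq_of_rank_eq [Fintype m] [Fintype n]
    {A : Matrix l m K} {B : Matrix m n K}
    (h : (A * B).rank = B.rank) :
    LinearMap.ker (A * B).mulVecLin = LinearMap.ker B.mulVecLin := by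
  have hAB := LinearMap.finrank_range_add_finrank_ker (A * B).mulVecLin
  have hB := LinearMap.finrank_range_add_finrank_ker B.mulVecLin
  rw [rank, rank] at h
  rw [mulVecLin_mul] at h hAB ⊢
  exact (Submodule.eq_of_le_of_finrank_le (LinearMap.ker_le_ker_comp _ _) (by omega)).symm

theorem mul_mul_mul_mul_eq_self_of_rank_eq [Fintype l] [Fintype m] [Fintype n] [Fintype o]
    {A : Matrix l m K} {P : Matrix m n K} {Q : Matrix o l K} {X : Matrix n o K}
    (hX : Q * A * P * X * (Q * A * P) = Q * A * P) (hrank : (Q * A * P).rank = A.rank) :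
    A * P * X * Q * A = A := by
  have hAP : (A * P).rank = A.rank :=
    le_antisymm (rank_mul_le_left A P)
      (hrank ▸ Matrix.mul_assoc Q A P ▸ rank_mul_le_right Q (A * P))
  have hrange := range_mulVecLin_mul_eq_of_rank_eq hAP
  have hker : LinearMap.ker (Q * A * P).mulVecLin = LinearMap.ker (A * P).mulVecLin := by
    rw [Matrix.mul_assoc]
    exact ker_mulVecLin_mul_eq_of_rank_eq (by rw [← Matrix.mul_assoc, hrank, hAP])
  refine ext_iff_mulVec.mpr fun v => ?_
  obtain ⟨w, hw⟩ : A *ᵥ v ∈ LinearMap.range (A * P).mulVecLin := hrange ▸ ⟨v, rfl⟩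
  rw [mulVecLin_apply] at hw
  -- `X * (Q * A * P) * w - w` lies in the kernel of `Q * A * P`, hence in that of `A * P`.
  have hXw : (A * P) *ᵥ ((X * (Q * A * P)) *ᵥ w) = (A * P) *ᵥ w := by
    have hmem : (X * (Q * A * P)) *ᵥ w - w ∈ LinearMap.ker (Q * A * P).mulVecLin := by
      rw [LinearMap.mem_ker, mulVecLin_apply, mulVec_sub, mulVec_mulVec, ← Matrix.mul_assoc, hX,
        sub_self]
    rwa [hker, LinearMap.mem_ker, mulVecLin_apply, mulVec_sub, sub_eq_zero] at hmem
  calc (A * P * X * Q * A) *ᵥ v = (A * P * X * Q) *ᵥ ((A * P) *ᵥ w) := by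
        rw [hw, mulVec_mulVec]
    _ = (A * P) *ᵥ ((X * (Q * A * P)) *ᵥ w) := by
        simp only [mulVec_mulVec, Matrix.mul_assoc]
    _ = A *ᵥ v := by rw [hXw, hw]

end Matrix

theorem matNorm_eq_zero_of_mul_eq_zero {n : ℕ} {A X : Matrix (Fin n) (Fin n) ℝ}
    (h : A * X = 0) : matNorm A X = 0 := by
  have hzero : ∀ r ∈ (fun v => vnorm A (X *ᵥ v) / vnorm A v) '' {v | A *ᵥ v ≠ 0}, r = 0 := by
    rintro _ ⟨v, -, rfl⟩
    simp only [vnorm, mulVec_mulVec, h, zero_mulVec, dotProduct_zero, Real.sqrt_zero, zero_div]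
  exact le_antisymm (Real.sSup_nonpos fun r hr => (hzero r hr).le)
    (Real.sSup_nonneg fun r hr => (hzero r hr).ge)

theorem stmt6_general {n nc : ℕ}
    (A M : Matrix (Fin n) (Fin n) ℝ) (P : Matrix (Fin n) (Fin nc) ℝ)
    (Acd : Matrix (Fin nc) (Fin nc) ℝ) (hAcd : IsMP (Pᵀ * A * P) Acd)
    (hrank : (Pᵀ * A * P).rank = A.rank) :
    matNorm A ((1 - P * Acd * Pᵀ * A) * (1 - M * A)) = 0 := by
  have hcoarse : A * P * Acd * Pᵀ * A = A := mul_mul_mul_mul_eq_self_of_rank_eq hAcd.1 hrank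
  have hcorrection : A * (1 - P * Acd * Pᵀ * A) = 0 := by
    rw [Matrix.mul_sub, Matrix.mul_one, sub_eq_zero]
    simpa only [Matrix.mul_assoc] using hcoarse.symm
  apply matNorm_eq_zero_of_mul_eq_zero
  rw [← Matrix.mul_assoc, hcorrection, Matrix.zero_mul]

theorem stmt6 {n nc : ℕ} (hn : nc < n)
    (A M : Matrix (Fin n) (Fin n) ℝ) (P : Matrix (Fin n) (Fin nc) ℝ)
    (hA : A.PosSemidef) (hA0 : A ≠ 0)
    (hM : matNorm A (1 - M * A) ≤ 1)
    (hAc0 : Pᵀ * A * P ≠ 0)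
    (Acd : Matrix (Fin nc) (Fin nc) ℝ) (hAcd : IsMP (Pᵀ * A * P) Acd)
    (hrank : (Pᵀ * A * P).rank = A.rank) :
    matNorm A ((1 - P * Acd * Pᵀ * A) * (1 - M * A)) = 0 :=
  stmt6_general A M P Acd hAcd hrank
end

section
/- Let A_c and B_c be n_c×n_c real symmetric positive semidefinite matrices and c₁, c₂ > 0. Then c₁ v_cᵀ A_c v_c ≤ v_cᵀ B_c v_c ≤ c₂ v_cᵀ A_c v_c for all v_c ∈ ℝ^{n_c} if and only if c₂⁻¹ v_cᵀ A_c† v_c ≤ v_cᵀ B_c† v_c ≤ c₁⁻¹ v_cᵀ A_c† v_c for all v_c ∈ ℝ^{n_c}. -/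
open Matrix

/-! Both inequalities force `ker A = ker B`, so `B†` vanishes on `range (I - A A†) = ker A` and
`s := vᵀ B† v` equals the `A`-inner product of `B† v` and `A† v`. Cauchy–Schwarz for that
semi-inner product then gives `s² ≤ (B† v)ᵀ A (B† v) · vᵀ A† v ≤ c₁⁻¹ s · vᵀ A† v`, whence
`s ≤ c₁⁻¹ vᵀ A† v`. Exchanging `A` and `B` gives the other bound, and since `(A†)† = A` the
converse is the same statement for the pseudo-inverses. -/

theorem Matrix.IsSymm.dotProduct_mulVec {m : Type*} [Fintype m] {S : Matrix m m ℝ}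
    (hS : S.IsSymm) (u w : m → ℝ) : u ⬝ᵥ S *ᵥ w = S *ᵥ u ⬝ᵥ w := by
  rw [Matrix.dotProduct_mulVec, ← mulVec_transpose, hS.eq]

theorem Matrix.PosSemidef.dotProduct_mulVec_sq_le {m : Type*} [Fintype m]
    {A : Matrix m m ℝ} (hA : A.PosSemidef) (u w : m → ℝ) :
    (u ⬝ᵥ A *ᵥ w) ^ 2 ≤ (u ⬝ᵥ A *ᵥ u) * (w ⬝ᵥ A *ᵥ w) := by
  classical
  have hsymm : A.toBilin'.IsSymm :=
    isSymm_toBilin'_iff_isSymm.mpr (isHermitian_iff_isSymm.mp hA.1)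
  simpa only [toBilin'_apply'] using
    A.toBilin'.apply_sq_le_of_symm
      (fun x => by simpa [toBilin'_apply'] using hA.dotProduct_mulVec_nonneg x)
      (LinearMap.BilinForm.isSymm_iff.mp hsymm) u w

theorem Matrix.PosSemidef.mulVec_eq_zero_of_dotProduct_mulVec_le {m : Type*} [Fintype m]
    {A B : Matrix m m ℝ} (hB : B.PosSemidef) {c : ℝ}
    (h : ∀ v, v ⬝ᵥ B *ᵥ v ≤ c * (v ⬝ᵥ A *ᵥ v)) {w : m → ℝ} (hw : A *ᵥ w = 0) :
    B *ᵥ w = 0 := by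
  have hBw : w ⬝ᵥ B *ᵥ w ≤ 0 := by simpa [hw] using h w
  have := hB.dotProduct_mulVec_zero_iff w
  simp only [star_trivial] at this
  exact this.mp (le_antisymm hBw (by simpa using hB.dotProduct_mulVec_nonneg w))

namespace IsMP

variable {m : ℕ} {S X Y : Matrix (Fin m) (Fin m) ℝ}

theorem symm (h : IsMP S X) : IsMP X S :=
  ⟨h.2.1, h.1, h.2.2.2, h.2.2.1⟩

theorem transpose_s14 (h : IsMP S X) : IsMP Sᵀ Xᵀ := by
  obtain ⟨hSXS, hXSX, hSX, hXS⟩ := h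
  refine ⟨?_, ?_, ?_, ?_⟩
  · rw [← transpose_mul, ← transpose_mul, ← mul_assoc, hSXS]
  · rw [← transpose_mul, ← transpose_mul, ← mul_assoc, hXSX]
  · rw [← transpose_mul, transpose_transpose, hXS]
  · rw [← transpose_mul, transpose_transpose, hSX]

theorem unique_s14 (hX : IsMP S X) (hY : IsMP S Y) : X = Y := by
  obtain ⟨hSXS, hXSX, hSX, hXS⟩ := hX
  obtain ⟨hSYS, hYSY, hSY, hYS⟩ := hY
  have hSX_eq : S * X = S * Y := by
    calc S * X = (S * Y * (S * X))ᵀ := by rw [← mul_assoc, hSYS, hSX]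
    _ = S * X * S * Y := by rw [transpose_mul, hSX, hSY]; noncomm_ring
    _ = S * Y := by rw [hSXS]
  have hXS_eq : X * S = Y * S := by
    calc X * S = (X * S * (Y * S))ᵀ := by rw [mul_assoc, ← mul_assoc S Y S, hSYS, hXS]
    _ = Y * (S * X * S) := by rw [transpose_mul, hXS, hYS]; noncomm_ring
    _ = Y * S := by rw [hSXS]
  calc X = X * S * X := hXSX.symm
  _ = Y * (S * Y) := by rw [hXS_eq, mul_assoc, hSX_eq]
  _ = Y := by rw [← mul_assoc, hYSY]

theorem isSymm (hS : S.IsSymm) (h : IsMP S X) : X.IsSymm := by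
  have h' := h.transpose_s14
  rw [hS.eq] at h'
  exact h'.unique_s14 h

theorem commute (hS : S.IsSymm) (h : IsMP S X) : S * X = X * S := by
  rw [← h.2.2.1, transpose_mul, (h.isSymm hS).eq, hS.eq]

theorem mulVec_eq_zero (hS : S.IsSymm) (h : IsMP S X) {w : Fin m → ℝ} (hw : S *ᵥ w = 0) :
    X *ᵥ w = 0 := by
  rw [← h.2.1, mul_assoc, h.commute hS, ← mulVec_mulVec, ← mulVec_mulVec, hw,
    mulVec_zero, mulVec_zero]

theorem dotProduct_mulVec_eq (hX : X.IsSymm) (h : IsMP S X) (v : Fin m → ℝ) :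
    v ⬝ᵥ X *ᵥ v = X *ᵥ v ⬝ᵥ S *ᵥ (X *ᵥ v) := by
  conv_lhs => rw [← h.2.1]
  rw [← mulVec_mulVec, ← mulVec_mulVec, hX.dotProduct_mulVec]

theorem posSemidef_s14 (hS : S.PosSemidef) (h : IsMP S X) : X.PosSemidef := by
  have hX : X.IsSymm := h.isSymm (isHermitian_iff_isSymm.mp hS.1)
  refine posSemidef_iff_dotProduct_mulVec.mpr ⟨isHermitian_iff_isSymm.mpr hX, fun v => ?_⟩
  rw [star_trivial, h.dotProduct_mulVec_eq hX]
  simpa using hS.dotProduct_mulVec_nonneg (X *ᵥ v)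

variable {A B A' B' : Matrix (Fin m) (Fin m) ℝ}

theorem dotProduct_mulVec_eq_of_ker_le (hA : A.IsSymm) (hB : B.IsSymm)
    (hA' : IsMP A A') (hB' : IsMP B B') (hker : ∀ w, A *ᵥ w = 0 → B *ᵥ w = 0)
    (v : Fin m → ℝ) : v ⬝ᵥ B' *ᵥ v = B' *ᵥ v ⬝ᵥ A *ᵥ (A' *ᵥ v) := by
  have hB'symm : B'.IsSymm := hB'.isSymm hB
  have hproj : A *ᵥ (v - A *ᵥ (A' *ᵥ v)) = 0 := by
    rw [mulVec_sub, mulVec_mulVec, mulVec_mulVec, mul_assoc, hA'.commute hA, ← mul_assoc,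
      hA'.1, sub_self]
  have hB'proj : B' *ᵥ (v - A *ᵥ (A' *ᵥ v)) = 0 := hB'.mulVec_eq_zero hB (hker _ hproj)
  calc v ⬝ᵥ B' *ᵥ v = B' *ᵥ v ⬝ᵥ v := hB'symm.dotProduct_mulVec v v
  _ = B' *ᵥ v ⬝ᵥ A *ᵥ (A' *ᵥ v) := by
    rw [← sub_eq_zero, ← dotProduct_sub, ← hB'symm.dotProduct_mulVec, hB'proj, dotProduct_zero]

theorem mul_dotProduct_mulVec_le (hA : A.PosSemidef) (hB : B.IsSymm)
    (hA' : IsMP A A') (hB' : IsMP B B') {c : ℝ} (hc : 0 ≤ c)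
    (hker : ∀ w, A *ᵥ w = 0 → B *ᵥ w = 0)
    (hle : ∀ v, c * (v ⬝ᵥ A *ᵥ v) ≤ v ⬝ᵥ B *ᵥ v) (v : Fin m → ℝ) :
    c * (v ⬝ᵥ B' *ᵥ v) ≤ v ⬝ᵥ A' *ᵥ v := by
  have hAsymm : A.IsSymm := isHermitian_iff_isSymm.mp hA.1
  have ht : v ⬝ᵥ A' *ᵥ v = A' *ᵥ v ⬝ᵥ A *ᵥ (A' *ᵥ v) :=
    hA'.dotProduct_mulVec_eq (hA'.isSymm hAsymm) v
  have hs : v ⬝ᵥ B' *ᵥ v = B' *ᵥ v ⬝ᵥ B *ᵥ (B' *ᵥ v) :=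
    hB'.dotProduct_mulVec_eq (hB'.isSymm hB) v
  have hcross := dotProduct_mulVec_eq_of_ker_le hAsymm hB hA' hB' hker v
  have ht0 : 0 ≤ v ⬝ᵥ A' *ᵥ v := by
    simpa using (hA'.posSemidef_s14 hA).dotProduct_mulVec_nonneg v
  have key : c * (v ⬝ᵥ B' *ᵥ v) ^ 2 ≤ (v ⬝ᵥ B' *ᵥ v) * (v ⬝ᵥ A' *ᵥ v) := calc
    c * (v ⬝ᵥ B' *ᵥ v) ^ 2 = c * (B' *ᵥ v ⬝ᵥ A *ᵥ (A' *ᵥ v)) ^ 2 := by rw [← hcross]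
    _ ≤ c * ((B' *ᵥ v ⬝ᵥ A *ᵥ (B' *ᵥ v)) * (A' *ᵥ v ⬝ᵥ A *ᵥ (A' *ᵥ v))) :=
      mul_le_mul_of_nonneg_left (hA.dotProduct_mulVec_sq_le _ _) hc
    _ = c * (B' *ᵥ v ⬝ᵥ A *ᵥ (B' *ᵥ v)) * (v ⬝ᵥ A' *ᵥ v) := by rw [ht, mul_assoc]
    _ ≤ (v ⬝ᵥ B' *ᵥ v) * (v ⬝ᵥ A' *ᵥ v) :=
      mul_le_mul_of_nonneg_right (hs ▸ hle (B' *ᵥ v)) ht0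
  rcases le_or_gt (v ⬝ᵥ B' *ᵥ v) 0 with hs0 | hs0
  · exact (mul_nonpos_of_nonneg_of_nonpos hc hs0).trans ht0
  · exact le_of_mul_le_mul_left (by linear_combination key) hs0

end IsMP

def SpectrallyEquiv {m : ℕ} (A B : Matrix (Fin m) (Fin m) ℝ) (c₁ c₂ : ℝ) : Prop :=
  ∀ v : Fin m → ℝ,
    c₁ * (v ⬝ᵥ A *ᵥ v) ≤ v ⬝ᵥ B *ᵥ v ∧ v ⬝ᵥ B *ᵥ v ≤ c₂ * (v ⬝ᵥ A *ᵥ v)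

theorem SpectrallyEquiv.moorePenrose {m : ℕ} {A B A' B' : Matrix (Fin m) (Fin m) ℝ}
    {c₁ c₂ : ℝ} (h : SpectrallyEquiv A B c₁ c₂) (hA : A.PosSemidef) (hB : B.PosSemidef)
    (hA' : IsMP A A') (hB' : IsMP B B') (hc₁ : 0 < c₁) (hc₂ : 0 < c₂) :
    SpectrallyEquiv A' B' c₂⁻¹ c₁⁻¹ := by
  have hlower (v : Fin m → ℝ) : v ⬝ᵥ A *ᵥ v ≤ c₁⁻¹ * (v ⬝ᵥ B *ᵥ v) :=
    (le_inv_mul_iff₀ hc₁).2 (h v).1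
  have hupper (v : Fin m → ℝ) : c₂⁻¹ * (v ⬝ᵥ B *ᵥ v) ≤ v ⬝ᵥ A *ᵥ v :=
    (inv_mul_le_iff₀ hc₂).2 (h v).2
  have hkerAB (w : Fin m → ℝ) : A *ᵥ w = 0 → B *ᵥ w = 0 :=
    hB.mulVec_eq_zero_of_dotProduct_mulVec_le (fun v => (h v).2)
  have hkerBA (w : Fin m → ℝ) : B *ᵥ w = 0 → A *ᵥ w = 0 :=
    hA.mulVec_eq_zero_of_dotProduct_mulVec_le hlower
  refine fun v => ⟨?_, ?_⟩
  · exact hB'.mul_dotProduct_mulVec_le hB (isHermitian_iff_isSymm.mp hA.1) hA'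
      (inv_nonneg.2 hc₂.le) hkerBA hupper v
  · exact (le_inv_mul_iff₀ hc₁).2 <|
      hA'.mul_dotProduct_mulVec_le hA (isHermitian_iff_isSymm.mp hB.1) hB' hc₁.le hkerAB
        (fun v => (h v).1) v

theorem stmt14 {nc : ℕ} (Ac Bc Acd Bcd : Matrix (Fin nc) (Fin nc) ℝ)
    (hAc : Ac.PosSemidef) (hBc : Bc.PosSemidef)
    (hAcd : IsMP Ac Acd) (hBcd : IsMP Bc Bcd)
    (c₁ c₂ : ℝ) (hc₁ : 0 < c₁) (hc₂ : 0 < c₂) :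
    (∀ v : Fin nc → ℝ,
        c₁ * (v ⬝ᵥ Ac.mulVec v) ≤ v ⬝ᵥ Bc.mulVec v ∧
        v ⬝ᵥ Bc.mulVec v ≤ c₂ * (v ⬝ᵥ Ac.mulVec v)) ↔
    (∀ v : Fin nc → ℝ,
        c₂⁻¹ * (v ⬝ᵥ Acd.mulVec v) ≤ v ⬝ᵥ Bcd.mulVec v ∧
        v ⬝ᵥ Bcd.mulVec v ≤ c₁⁻¹ * (v ⬝ᵥ Acd.mulVec v)) := by
  refine ⟨fun h => SpectrallyEquiv.moorePenrose h hAc hBc hAcd hBcd hc₁ hc₂, fun h => ?_⟩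
  simpa only [SpectrallyEquiv, inv_inv] using
    SpectrallyEquiv.moorePenrose h (hAcd.posSemidef_s14 hAc) (hBcd.posSemidef_s14 hBc) hAcd.symm
      hBcd.symm (inv_pos.2 hc₂) (inv_pos.2 hc₁)
end
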